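/- Let m and k be positive integers, let a be the k-binomial decomposition of m, let b be a nonempty strictly decreasing sequence of nonnegative integers, and let c be a (possibly empty) strictly decreasing sequence of nonnegative integers. Assume B(a,k) = B(b,k) + B(c,k−1) and b ≥_lex a−1. Then for every integer i ≥ 0, B(a, k−i) ≤ B(b, k−i) + B(c, k−i−1). -/

import Mathlib

/-- Generalized binomial coefficient `C(n, j)`:
`C(n,j) = n(n-1)⋯(n-j+1)/j!` for `j ≥ 0` and `C(n,j) = 0` for `j < 0`. -/
def C (n j : ℤ) : ℤ :=
  if 0 ≤ j then
    if 0 ≤ n then ((n.toNat.choose j.toNat : ℕ) : ℤ)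
    else (-1) ^ j.toNat * (((j - n - 1).toNat.choose j.toNat : ℕ) : ℤ)
  else 0

/-- `B a k = Σ_l C(a_l, k - l)`. -/
def B : List ℤ → ℤ → ℤ
  | [], _ => 0
  | x :: xs, k => C x k + B xs (k - 1)

/-- `a` has the shape of a `k`-binomial decomposition: strictly decreasing,
length at most `k`, and `a_i ≥ k - i` for every index. -/
def IsKBinomSeq (k : ℕ) (a : List ℤ) : Prop :=
  a.Chain' (· > ·) ∧ a.length ≤ k ∧ ∀ i < a.length, (k : ℤ) - i ≤ a.getD i 0

/-- `a` is the `k`-binomial decomposition of `m`. -/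
def IsKBinom (k : ℕ) (m : ℤ) (a : List ℤ) : Prop :=
  IsKBinomSeq k a ∧ m = B a (k : ℤ)

/-- Non-strict lexicographic order on integer sequences. -/
def lexLE (x y : List ℤ) : Prop := x = y ∨ List.Lex (· < ·) x y

/-!
For a strictly decreasing sequence `l` of entries below `n`, the *cascade* of `l` at level `r`
consists of the `r`-subsets of `{0, …, l₀ - 1}`, then `l₀` together with the `(r-1)`-subsets of
`{0, …, l₁ - 1}`, and so on; it is an initial segment of colex with `B(l, r)` members, so binomial
sums become sizes of set families. Shadows move cascades down one level (exactly so when `l` has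
the shape of a binomial decomposition), and `b ≥_lex a - 1` makes the cascades of `a - 1` lie in
those of `b`. By Pascal's rule `B(c, k-1) ≤ B(a-1, k-1)`, so a colex initial segment `𝒥` of size
`B(c, k-1)` fits inside the cascade of `a - 1`. Coning `𝒥` over a new top vertex and adding the
cascade of `b` gives a `k`-uniform family `ℱ` with `B(a, k)` members, and Kruskal–Katona, applied
twice, yields `B(a, k-i) ≤ |∂^i ℱ| ≤ B(b, k-i) + |∂^i 𝒥| ≤ B(b, k-i) + B(c, k-i-1)`.
-/

open Finset
open scoped FinsetFamily

lemma C_of_neg {j : ℤ} (hj : j < 0) (n : ℤ) : C n j = 0 := by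
  simp [C, not_le.2 hj]

@[simp] lemma C_zero (n : ℤ) : C n 0 = 1 := by
  unfold C
  split_ifs <;> simp_all

lemma C_natCast (x j : ℕ) : C x j = x.choose j := by
  simp [C]

lemma C_pascal {n : ℤ} (hn : 1 ≤ n) (j : ℤ) : C n j = C (n - 1) j + C (n - 1) (j - 1) := by
  lift n - 1 to ℕ using (by omega) with p hp
  obtain rfl : n = p + 1 := by omega
  rcases lt_trichotomy j 0 with hj | rfl | hj
  · rw [C_of_neg hj, C_of_neg hj, C_of_neg (by omega), add_zero]
  · rw [C_zero, C_zero, C_of_neg (by omega), add_zero]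
  · lift j - 1 to ℕ using (by omega) with q hq
    obtain rfl : j = q + 1 := by omega
    simp only [← Nat.cast_succ, C_natCast, Nat.choose_succ_succ']
    push_cast
    ring

lemma B_of_neg {j : ℤ} (hj : j < 0) (l : List ℤ) : B l j = 0 := by
  induction l generalizing j with
  | nil => rfl
  | cons x l ih => simp [B, C_of_neg hj, ih (show j - 1 < 0 by omega)]

lemma B_le_B_of_nonpos {j : ℤ} (hj : j ≤ 0) (a : List ℤ) {b : List ℤ} (hb : b ≠ []) :
    B a j ≤ B b j := by
  rcases hj.lt_or_eq with hj | rfl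
  · simp [B_of_neg hj]
  · obtain ⟨y, b, rfl⟩ := List.exists_cons_of_ne_nil hb
    cases a <;> simp [B, B_of_neg]

lemma B_pascal {l : List ℤ} (hl : ∀ x ∈ l, 1 ≤ x) (j : ℤ) :
    B l j = B (l.map (· - 1)) j + B (l.map (· - 1)) (j - 1) := by
  induction l generalizing j with
  | nil => rfl
  | cons x l ih =>
    simp only [List.forall_mem_cons] at hl
    simp only [B, List.map_cons, C_pascal hl.1, ih hl.2]
    ring

section Cone

variable {α : Type*} [DecidableEq α] {𝒜 : Finset (Finset α)} {v : α}

lemma card_image_insert (h : ∀ S ∈ 𝒜, v ∉ S) : #(𝒜.image (insert v)) = #𝒜 :=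
  card_image_of_injOn fun S hS T hT hST => by
    simpa [erase_insert (h S hS), erase_insert (h T hT)] using congrArg (erase · v) hST

lemma shadow_union (𝒜 ℬ : Finset (Finset α)) : ∂ (𝒜 ∪ ℬ) = ∂ 𝒜 ∪ ∂ ℬ :=
  sup_union

lemma notMem_of_mem_shadow (h : ∀ S ∈ 𝒜, v ∉ S) : ∀ T ∈ ∂ 𝒜, v ∉ T := by
  intro T hT hvT
  obtain ⟨S, hS, a, -, rfl⟩ := mem_shadow_iff.1 hT
  exact h S hS (mem_of_mem_erase hvT)

lemma shadow_image_insert_subset (h : ∀ S ∈ 𝒜, v ∉ S) :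
    ∂ (𝒜.image (insert v)) ⊆ (∂ 𝒜).image (insert v) ∪ 𝒜 := by
  intro T hT
  obtain ⟨_, hvS, a, ha, rfl⟩ := mem_shadow_iff.1 hT
  obtain ⟨S, hS, rfl⟩ := mem_image.1 hvS
  obtain rfl | hav := eq_or_ne a v
  · rw [erase_insert (h S hS)]
    exact mem_union_right _ hS
  · rw [erase_insert_of_ne hav.symm]
    exact mem_union_left _ <| mem_image_of_mem _ <|
      mem_shadow_iff.2 ⟨S, hS, a, mem_of_mem_insert_of_ne ha hav, rfl⟩

end Cone

section Cascade

variable {α : Type*} [LinearOrder α] [LocallyFiniteOrderBot α]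

def cascade : List α → ℕ → Finset (Finset α)
  | [], _ => ∅
  | _ :: _, 0 => {∅}
  | x :: l, r + 1 => (Iio x).powersetCard (r + 1) ∪ (cascade l r).image (insert x)

@[simp] lemma cascade_nil (r : ℕ) : cascade ([] : List α) r = ∅ := rfl

@[simp] lemma cascade_cons_zero (x : α) (l : List α) : cascade (x :: l) 0 = {∅} := rfl

lemma cascade_cons_succ (x : α) (l : List α) (r : ℕ) :
    cascade (x :: l) (r + 1) = (Iio x).powersetCard (r + 1) ∪ (cascade l r).image (insert x) :=
  rfl

lemma mem_cascade_cons_succ {x : α} {l : List α} {r : ℕ} {S : Finset α} :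
    S ∈ cascade (x :: l) (r + 1) ↔
      (S ⊆ Iio x ∧ #S = r + 1) ∨ ∃ T ∈ cascade l r, insert x T = S := by
  simp [cascade_cons_succ]

variable {l : List α} {r : ℕ} {S : Finset α} {𝒥 : Finset (Finset α)} {v : α}

lemma lt_of_mem_cascade (hv : ∀ x ∈ l, x < v) (hS : S ∈ cascade l r) : ∀ y ∈ S, y < v := by
  induction l generalizing r S with
  | nil => simp at hS
  | cons x l ih =>
    rw [List.forall_mem_cons] at hv
    cases r with
    | zero => simp_all
    | succ r =>
      rcases mem_cascade_cons_succ.1 hS with ⟨hS, -⟩ | ⟨T, hT, rfl⟩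
      · exact fun y hy => (mem_Iio.1 (hS hy)).trans hv.1
      · simpa [hv.1] using ih hv.2 hT

lemma notMem_of_mem_cascade {x : α} (hl : (x :: l).Pairwise (· > ·)) (hS : S ∈ cascade l r) :
    x ∉ S := fun hx =>
  lt_irrefl x (lt_of_mem_cascade (fun _ => List.rel_of_pairwise_cons hl) hS x hx)

lemma sized_cascade (hl : l.Pairwise (· > ·)) : (cascade l r : Set (Finset α)).Sized r := by
  induction l generalizing r with
  | nil => simp [Set.Sized]
  | cons x l ih =>
    intro S hS
    cases r with
    | zero => simp_all
    | succ r =>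
      rcases mem_cascade_cons_succ.1 hS with ⟨-, hS⟩ | ⟨T, hT, rfl⟩
      · exact hS
      · rw [card_insert_of_notMem (notMem_of_mem_cascade hl hT), ih hl.of_cons hT]

lemma mem_cascade_cons_of_subset_Iio {x : α} (hS : S ⊆ Iio x) (hr : #S = r) :
    S ∈ cascade (x :: l) r := by
  cases r with
  | zero => simpa using hr
  | succ r => exact mem_cascade_cons_succ.2 (Or.inl ⟨hS, hr⟩)

lemma cascade_subset_cascade_cons {x : α} (hl : (x :: l).Pairwise (· > ·)) :
    cascade l r ⊆ cascade (x :: l) r := fun _ hS =>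
  mem_cascade_cons_of_subset_Iio
    (fun y hy => mem_Iio.2 (lt_of_mem_cascade (fun _ => List.rel_of_pairwise_cons hl) hS y hy))
    (sized_cascade hl.of_cons hS)

lemma shadow_cascade_subset (hl : l.Pairwise (· > ·)) : ∂ (cascade l (r + 1)) ⊆ cascade l r := by
  induction l generalizing r with
  | nil => simp
  | cons x l ih =>
    intro T hT
    obtain ⟨S, hS, a, ha, rfl⟩ := mem_shadow_iff.1 hT
    rcases mem_cascade_cons_succ.1 hS with ⟨hSx, hSr⟩ | ⟨S', hS', rfl⟩
    · exact mem_cascade_cons_of_subset_Iio ((erase_subset a S).trans hSx)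
        (by rw [card_erase_of_mem ha, hSr, Nat.add_sub_cancel])
    have hxS' := notMem_of_mem_cascade hl hS'
    obtain rfl | hax := eq_or_ne a x
    · rw [erase_insert hxS']
      exact cascade_subset_cascade_cons hl hS'
    have haS' : a ∈ S' := mem_of_mem_insert_of_ne ha hax
    obtain ⟨r, rfl⟩ : ∃ r', r = r' + 1 :=
      Nat.exists_eq_add_one.2 (sized_cascade hl.of_cons hS' ▸ card_pos.2 ⟨a, haS'⟩)
    rw [erase_insert_of_ne hax.symm]
    exact mem_cascade_cons_succ.2 <|
      Or.inr ⟨_, ih hl.of_cons (mem_shadow_iff.2 ⟨S', hS', a, haS', rfl⟩), rfl⟩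

lemma shadow_iterate_cascade_subset (hl : l.Pairwise (· > ·)) (i : ℕ) :
    ∂^[i] (cascade l (r + i)) ⊆ cascade l r := by
  induction i generalizing r with
  | zero => rfl
  | succ i ih =>
    rw [Function.iterate_succ_apply', ← add_assoc, add_right_comm]
    exact (shadow_mono (ih (r := r + 1))).trans (shadow_cascade_subset hl)

/-- The shape condition `a_j ≥ k - j` of a `k`-binomial decomposition: the `j`-th entry of `l`
has at least `r - j` predecessors. -/
def IsTall : List α → ℕ → Prop
  | [], _ => True
  | x :: l, r => r ≤ #(Iio x) ∧ IsTall l (r - 1)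

lemma IsTall.mono {s : ℕ} (h : IsTall l r) (hsr : s ≤ r) : IsTall l s := by
  induction l generalizing r s with
  | nil => trivial
  | cons x l ih => exact ⟨hsr.trans h.1, ih h.2 (by omega)⟩

lemma cascade_subset_shadow (hl : l.Pairwise (· > ·)) (ht : IsTall l (r + 1)) :
    cascade l r ⊆ ∂ (cascade l (r + 1)) := by
  induction l generalizing r with
  | nil => simp
  | cons x l ih =>
    intro T hT
    rw [mem_shadow_iff_insert_mem]
    have hTx : (T ⊆ Iio x ∧ #T = r) ∨
        ∃ r', r = r' + 1 ∧ ∃ T' ∈ cascade l r', insert x T' = T := by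
      cases r with
      | zero => simp_all
      | succ r => simpa using mem_cascade_cons_succ.1 hT
    rcases hTx with ⟨hTx, rfl⟩ | ⟨r, rfl, T', hT', rfl⟩
    · obtain ⟨y, hy, hyT⟩ := exists_mem_notMem_of_card_lt_card (s := T) (t := Iio x)
        (Nat.lt_of_succ_le ht.1)
      exact ⟨y, hyT, mem_cascade_cons_of_subset_Iio (insert_subset hy hTx)
        (card_insert_of_notMem hyT)⟩
    obtain ⟨y, hyT', hy⟩ := mem_shadow_iff_insert_mem.1 (ih hl.of_cons ht.2 hT')
    have hyx : y < x :=
      lt_of_mem_cascade (fun _ => List.rel_of_pairwise_cons hl) hy y (mem_insert_self y T')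
    refine ⟨y, by simp [hyx.ne, hyT'], ?_⟩
    rw [insert_comm]
    exact mem_cascade_cons_succ.2 (Or.inr ⟨_, hy, rfl⟩)

lemma cascade_subset_shadow_iterate (hl : l.Pairwise (· > ·)) {i : ℕ} (ht : IsTall l (r + i)) :
    cascade l r ⊆ ∂^[i] (cascade l (r + i)) := by
  induction i generalizing r with
  | zero => rfl
  | succ i ih =>
    rw [Function.iterate_succ_apply']
    rw [← add_assoc, add_right_comm] at ht ⊢
    exact (cascade_subset_shadow hl (ht.mono (by omega))).trans (shadow_mono (ih ht))

open Finset.Colex in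
lemma isInitSeg_cascade (hl : l.Pairwise (· > ·)) : IsInitSeg (cascade l r) r := by
  refine ⟨sized_cascade hl, ?_⟩
  induction l generalizing r with
  | nil => simp
  | cons x l ih =>
    rintro s t hs ⟨hts, rfl⟩
    have hlx : ∀ y ∈ l, y < x := fun _ => List.rel_of_pairwise_cons hl
    have hsx : ∀ y ∈ s, y ≤ x := by
      cases h : #t with
      | zero => simp_all
      | succ r =>
        rw [h] at hs
        rcases mem_cascade_cons_succ.1 hs with ⟨hs, -⟩ | ⟨s', hs', rfl⟩
        · exact fun y hy => (mem_Iio.1 (hs hy)).le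
        · simpa using fun y hy => (lt_of_mem_cascade hlx hs' y hy).le
    by_cases hxt : x ∉ t
    · exact mem_cascade_cons_of_subset_Iio (fun y hy => mem_Iio.2 <|
        (forall_le_mono hts.le hsx y hy).lt_of_ne fun h => hxt (h ▸ hy)) rfl
    rw [not_not] at hxt
    obtain ⟨r, hr⟩ := Nat.exists_eq_add_one.2 (card_pos.2 ⟨x, hxt⟩)
    rw [hr] at hs ⊢
    rcases mem_cascade_cons_succ.1 hs with ⟨hs, -⟩ | ⟨s', hs', rfl⟩
    · exact absurd (forall_lt_mono hts.le (fun y hy => mem_Iio.1 (hs hy)) x hxt) (lt_irrefl x)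
    have hxs' := notMem_of_mem_cascade hl hs'
    have hts' : toColex (t.erase x) < toColex s' := by
      simpa [sdiff_singleton_eq_erase, erase_insert hxs'] using
        (toColex_sdiff_lt_toColex_sdiff (u := {x}) (by simpa using hxt) (by simp)).2 hts
    refine mem_cascade_cons_succ.2 <|
      Or.inr ⟨t.erase x, ih hl.of_cons hs' ⟨hts', ?_⟩, insert_erase hxt⟩
    rw [card_erase_of_mem hxt, hr, Nat.add_sub_cancel]

lemma cascade_subset_cascade_of_lex {m : List α} (hl : l.Pairwise (· > ·))
    (hm : m.Pairwise (· > ·)) (h : List.Lex (· < ·) l m) : cascade l r ⊆ cascade m r := by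
  induction h generalizing r with
  | nil => simp
  | cons _ ih =>
    cases r with
    | zero => rfl
    | succ r =>
      simp only [cascade_cons_succ]
      exact union_subset_union subset_rfl (image_subset_image (ih hl.of_cons hm.of_cons))
  | @rel x l y m hxy =>
    intro S hS
    have hlt : ∀ z ∈ x :: l, z < y := by
      simpa [hxy] using fun z hz => (List.rel_of_pairwise_cons hl hz).trans hxy
    exact mem_cascade_cons_of_subset_Iio (fun z hz => mem_Iio.2 (lt_of_mem_cascade hlt hS z hz))
      (sized_cascade hl hS)

lemma card_cascade_cons_succ {x : α} (hl : (x :: l).Pairwise (· > ·)) :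
    #(cascade (x :: l) (r + 1)) = (#(Iio x)).choose (r + 1) + #(cascade l r) := by
  rw [cascade_cons_succ, card_union_of_disjoint, card_powersetCard,
    card_image_insert fun _ => notMem_of_mem_cascade hl]
  refine disjoint_left.2 fun S hS hS' => ?_
  obtain ⟨T, -, rfl⟩ := mem_image.1 hS'
  exact lt_irrefl x (mem_Iio.1 ((mem_powersetCard.1 hS).1 (mem_insert_self x T)))

lemma shadow_cascade_union_cone_subset (hl : l.Pairwise (· > ·)) (hJ : 𝒥 ⊆ cascade l r)
    (hv : ∀ S ∈ 𝒥, v ∉ S) :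
    ∂ (cascade l (r + 1) ∪ 𝒥.image (insert v)) ⊆ cascade l r ∪ (∂ 𝒥).image (insert v) := by
  rw [shadow_union]
  exact union_subset ((shadow_cascade_subset hl).trans subset_union_left) <|
    (shadow_image_insert_subset hv).trans <|
      union_subset subset_union_right (hJ.trans subset_union_left)

lemma shadow_iterate_cascade_union_cone_subset (hl : l.Pairwise (· > ·)) {i : ℕ}
    (hJ : 𝒥 ⊆ cascade l (r + i)) (hv : ∀ S ∈ 𝒥, v ∉ S) :
    ∂^[i] (cascade l (r + i + 1) ∪ 𝒥.image (insert v)) ⊆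
      cascade l (r + 1) ∪ (∂^[i] 𝒥).image (insert v) := by
  induction i generalizing 𝒥 with
  | zero => exact union_subset_union (shadow_iterate_cascade_subset hl 0) subset_rfl
  | succ i ih =>
    rw [Function.iterate_succ_apply, Function.iterate_succ_apply]
    refine (shadow_monotone.iterate i (shadow_cascade_union_cone_subset hl hJ hv)).trans ?_
    exact ih ((shadow_mono hJ).trans (shadow_cascade_subset hl)) (notMem_of_mem_shadow hv)

end Cascade

open Finset.Colex in
lemma Finset.Colex.IsInitSeg.exists_subset_card_eq {α : Type*} [LinearOrder α]
    {𝒢 : Finset (Finset α)} {r M : ℕ} (h𝒢 : IsInitSeg 𝒢 r) (hM : M ≤ #𝒢) :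
    ∃ 𝒥 ⊆ 𝒢, IsInitSeg 𝒥 r ∧ #𝒥 = M := by
  induction M with
  | zero => exact ⟨∅, empty_subset _, isInitSeg_empty, rfl⟩
  | succ M ih =>
    obtain ⟨𝒥, h𝒥𝒢, h𝒥, rfl⟩ := ih (by omega)
    obtain ⟨s, hs, hmin⟩ := exists_min_image (𝒢 \ 𝒥) toColex
      (sdiff_nonempty.2 fun h => by have := card_le_card h; omega)
    rw [mem_sdiff] at hs
    refine ⟨insert s 𝒥, insert_subset hs.1 h𝒥𝒢, ⟨?_, ?_⟩, card_insert_of_notMem hs.2⟩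
    · simpa [Set.Sized] using ⟨h𝒢.1 hs.1, h𝒥.1⟩
    rintro u t hu ⟨htu, rfl⟩
    refine mem_insert_of_mem (by_contra fun ht => ?_)
    have ht𝒢 : t ∈ 𝒢 := by
      rcases mem_insert.1 hu with rfl | hu
      · exact h𝒢.2 hs.1 ⟨htu, rfl⟩
      · exact h𝒥𝒢 (h𝒥.2 hu ⟨htu, rfl⟩)
    rcases mem_insert.1 hu with rfl | hu
    · exact (hmin t (mem_sdiff.2 ⟨ht𝒢, ht⟩)).not_gt htu
    · exact ht (h𝒥.2 hu ⟨htu, rfl⟩)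

theorem card_cascade_le_card_cascade_add {n : ℕ} {A A' B C : List (Fin n)} {v : Fin n} {r i : ℕ}
    (hA : A.Pairwise (· > ·)) (hA' : A'.Pairwise (· > ·)) (hB : B.Pairwise (· > ·))
    (hC : C.Pairwise (· > ·)) (hAt : IsTall A (r + i + 1)) (hBv : ∀ x ∈ B, x < v)
    (hA'B : A' = B ∨ List.Lex (· < ·) A' B)
    (hABC : #(cascade A (r + i + 1)) = #(cascade B (r + i + 1)) + #(cascade C (r + i)))
    (hAA' : #(cascade A (r + i + 1)) ≤ #(cascade A' (r + i + 1)) + #(cascade A' (r + i))) :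
    #(cascade A (r + 1)) ≤ #(cascade B (r + 1)) + #(cascade C r) := by
  have hsub : ∀ s, cascade A' s ⊆ cascade B s := by
    rcases hA'B with rfl | h
    exacts [fun _ => subset_rfl, fun _ => cascade_subset_cascade_of_lex hA' hB h]
  have hvB : ∀ s, ∀ S ∈ cascade B s, v ∉ S := fun s S hS hvS =>
    lt_irrefl v (lt_of_mem_cascade hBv hS v hvS)
  obtain ⟨𝒥, h𝒥A', h𝒥, h𝒥C⟩ := (isInitSeg_cascade hA' (r := r + i)).exists_subset_card_eq
    (M := #(cascade C (r + i))) (by have := card_le_card (hsub (r + i + 1)); omega)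
  have h𝒥B : 𝒥 ⊆ cascade B (r + i) := h𝒥A'.trans (hsub _)
  have h𝒥v : ∀ S ∈ 𝒥, v ∉ S := fun S hS => hvB _ S (h𝒥B hS)
  set ℱ := cascade B (r + i + 1) ∪ 𝒥.image (insert v)
  have hℱ : (ℱ : Set (Finset (Fin n))).Sized (r + i + 1) := by
    intro S hS
    rcases mem_union.1 hS with hS | hS
    · exact sized_cascade hB hS
    · obtain ⟨T, hT, rfl⟩ := mem_image.1 hS
      rw [card_insert_of_notMem (h𝒥v T hT), h𝒥.1 hT]
  have hℱcard : #(cascade A (r + i + 1)) ≤ #ℱ := by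
    rw [card_union_of_disjoint, card_image_insert h𝒥v]
    · omega
    refine disjoint_left.2 fun S hS hS' => ?_
    obtain ⟨T, -, rfl⟩ := mem_image.1 hS'
    exact hvB _ _ hS (mem_insert_self v T)
  calc #(cascade A (r + 1))
      ≤ #(∂^[i] (cascade A (r + i + 1))) := by
        rw [add_right_comm] at hAt ⊢
        exact card_le_card (cascade_subset_shadow_iterate hA hAt)
    _ ≤ #(∂^[i] ℱ) := iterated_kk hℱ hℱcard (isInitSeg_cascade hA)
    _ ≤ #(cascade B (r + 1)) + #(∂^[i] 𝒥) :=
        (card_le_card (shadow_iterate_cascade_union_cone_subset hB h𝒥B h𝒥v)).trans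
          ((card_union_le _ _).trans (Nat.add_le_add_left card_image_le _))
    _ ≤ #(cascade B (r + 1)) + #(∂^[i] (cascade C (r + i))) :=
        Nat.add_le_add_left (iterated_kk (sized_cascade hC) h𝒥C.le h𝒥) _
    _ ≤ #(cascade B (r + 1)) + #(cascade C r) :=
        Nat.add_le_add_left (card_le_card (shadow_iterate_cascade_subset hC i)) _

theorem List.Lex.of_map {α β : Type*} {f : α → β} (hf : Function.Injective f)
    {r : α → α → Prop} {s : β → β → Prop} (hrs : ∀ a b, s (f a) (f b) → r a b) {l m : List α}
    (h : List.Lex s (l.map f) (m.map f)) : List.Lex r l m := by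
  generalize hl : l.map f = l' at h
  generalize hm : m.map f = m' at h
  induction h generalizing l m with
  | nil =>
    obtain rfl := List.map_eq_nil_iff.1 hl
    obtain ⟨_, _, rfl, -⟩ := List.map_eq_cons_iff.1 hm
    exact .nil
  | cons _ ih =>
    obtain ⟨x, l, rfl, hx, rfl⟩ := List.map_eq_cons_iff.1 hl
    obtain ⟨y, m, rfl, hy, rfl⟩ := List.map_eq_cons_iff.1 hm
    obtain rfl := hf (hx.trans hy.symm)
    exact .cons (ih rfl rfl)
  | rel h =>
    obtain ⟨x, l, rfl, rfl, rfl⟩ := List.map_eq_cons_iff.1 hl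
    obtain ⟨y, m, rfl, rfl, rfl⟩ := List.map_eq_cons_iff.1 hm
    exact .rel (hrs x y h)

def intVals {n : ℕ} (L : List (Fin n)) : List ℤ :=
  L.map fun t : Fin n => ((t : ℕ) : ℤ)

lemma card_cascade {n : ℕ} {L : List (Fin n)} (hL : L.Pairwise (· > ·)) (r : ℕ) :
    (#(cascade L r) : ℤ) = B (intVals L) r := by
  unfold intVals
  induction L generalizing r with
  | nil => simp [B]
  | cons x L ih =>
    cases r with
    | zero => simp [B, B_of_neg]
    | succ r =>
      rw [card_cascade_cons_succ hL, Fin.card_Iio, Nat.cast_add, ih hL.of_cons, List.map_cons, B,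
        C_natCast, Nat.cast_succ, add_sub_cancel_right]

lemma exists_pairwise_intVals_eq {n : ℕ} {l : List ℤ} (hl : l.Pairwise (· > ·))
    (hbound : ∀ x ∈ l, 0 ≤ x ∧ x < n) :
    ∃ L : List (Fin n), L.Pairwise (· > ·) ∧ intVals L = l := by
  lift l to List ℕ using fun x hx => (hbound x hx).1
  lift l to List (Fin n) using fun x hx => by exact_mod_cast (hbound x (List.mem_map_of_mem hx)).2
  refine ⟨l, ?_, by simp [intVals]⟩
  simpa [List.pairwise_map] using hl

lemma isTall_of_sub_le_getD {n : ℕ} {L : List (Fin n)} {r : ℕ}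
    (h : ∀ j < L.length, (r : ℤ) - j ≤ (intVals L).getD j 0) : IsTall L r := by
  unfold intVals at h
  induction L generalizing r with
  | nil => trivial
  | cons x L ih =>
    refine ⟨?_, ih fun j hj => ?_⟩
    · simpa [Fin.card_Iio] using h 0 (by simp)
    · have := h (j + 1) (by simpa using hj)
      have : (0 : ℤ) ≤ (L.map fun t : Fin n => ((t : ℕ) : ℤ)).getD j 0 := by
        rw [List.getD_eq_getElem _ _ (by simpa using hj)]
        simp
      simp only [List.map_cons, List.getD_cons_succ] at *
      omega

lemma lexLE.of_intVals {n : ℕ} {L M : List (Fin n)} (h : lexLE (intVals L) (intVals M)) :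
    L = M ∨ List.Lex (· < ·) L M := by
  have hinj : Function.Injective fun t : Fin n => ((t : ℕ) : ℤ) :=
    Nat.cast_injective.comp Fin.val_injective
  unfold intVals at h
  rcases h with h | h
  exacts [Or.inl (List.map_injective_iff.2 hinj h),
    Or.inr (h.of_map hinj fun x y hxy => by simpa using hxy)]

theorem key_inequality_fin {n : ℕ} {A A' B' C' : List (Fin n)} {v : Fin n} {k i : ℕ}
    (hik : i < k) (hA : A.Pairwise (· > ·)) (hA' : A'.Pairwise (· > ·))
    (hB' : B'.Pairwise (· > ·)) (hC' : C'.Pairwise (· > ·)) (hAt : IsTall A k)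
    (hA1 : ∀ x ∈ intVals A, 1 ≤ x) (hBv : ∀ x ∈ B', x < v)
    (hA'A : intVals A' = (intVals A).map (· - 1)) (hA'B : A' = B' ∨ List.Lex (· < ·) A' B')
    (heq : B (intVals A) k = B (intVals B') k + B (intVals C') (k - 1)) :
    B (intVals A) (k - i) ≤ B (intVals B') (k - i) + B (intVals C') (k - i - 1) := by
  obtain ⟨r, rfl⟩ : ∃ r, k = r + i + 1 := ⟨k - i - 1, by omega⟩
  rw [show ((r + i + 1 : ℕ) : ℤ) - i - 1 = (r : ℕ) by push_cast; ring,
    show ((r + i + 1 : ℕ) : ℤ) - i = (r + 1 : ℕ) by push_cast; ring]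
  have hk : ((r + i + 1 : ℕ) : ℤ) - 1 = (r + i : ℕ) := by push_cast; ring
  have hpascal := B_pascal hA1 (r + i + 1 : ℕ)
  rw [← hA'A, hk, ← card_cascade hA, ← card_cascade hA', ← card_cascade hA'] at hpascal
  rw [hk, ← card_cascade hA, ← card_cascade hB', ← card_cascade hC'] at heq
  rw [← card_cascade hA, ← card_cascade hB', ← card_cascade hC']
  exact_mod_cast card_cascade_le_card_cascade_add hA hA' hB' hC' hAt hBv hA'B
    (by exact_mod_cast heq) (by exact_mod_cast hpascal.le)

lemma IsKBinomSeq.one_le {k : ℕ} {a : List ℤ} (h : IsKBinomSeq k a) : ∀ x ∈ a, 1 ≤ x := by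
  intro x hx
  obtain ⟨j, hj, rfl⟩ := List.getElem_of_mem hx
  have := h.2.2 j hj
  rw [List.getD_eq_getElem _ _ hj] at this
  have := h.2.1
  omega

lemma List.exists_forall_lt_natCast (l : List ℤ) : ∃ N : ℕ, ∀ x ∈ l, x < N :=
  ⟨(l.map Int.toNat).sum + 1, fun x hx => by
    have := List.le_sum_of_mem (List.mem_map_of_mem (f := Int.toNat) hx)
    omega⟩

theorem key_inequality_general
    (m : ℤ) (k : ℕ)
    (a : List ℤ) (ha : IsKBinom k m a)
    (b : List ℤ) (hbne : b ≠ []) (hbdec : b.Chain' (· > ·)) (hbnn : ∀ x ∈ b, 0 ≤ x)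
    (c : List ℤ) (hcdec : c.Chain' (· > ·)) (hcnn : ∀ x ∈ c, 0 ≤ x)
    (heq : B a (k : ℤ) = B b (k : ℤ) + B c ((k : ℤ) - 1))
    (hlex : lexLE (a.map (· - 1)) b)
    (i : ℕ) :
    B a ((k : ℤ) - i) ≤ B b ((k : ℤ) - i) + B c ((k : ℤ) - i - 1) := by
  obtain ⟨hak, -⟩ := ha
  rcases le_or_gt k i with hki | hik
  · rw [B_of_neg (by omega) c, add_zero]
    exact B_le_B_of_nonpos (by omega) a hbne
  have ha1 := hak.one_le
  obtain ⟨N, hN⟩ := (a ++ b ++ c).exists_forall_lt_natCast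
  simp only [List.mem_append, or_imp, forall_and] at hN
  obtain ⟨⟨haN, hbN⟩, hcN⟩ := hN
  -- In `Fin (N + 1)` the entries of `a - 1` and `b` stay below the extra vertex `N`.
  obtain ⟨A, hA, rfl⟩ := exists_pairwise_intVals_eq (n := N + 1)
    (List.isChain_iff_pairwise.1 hak.1) fun x hx =>
      ⟨by linarith [ha1 x hx], by have := haN x hx; omega⟩
  obtain ⟨A', hA', hA'A⟩ := exists_pairwise_intVals_eq (n := N + 1) (l := (intVals A).map (· - 1))
    (by simpa [intVals, List.pairwise_map] using hA) fun x hx => by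
      obtain ⟨y, hy, rfl⟩ := List.mem_map.1 hx
      exact ⟨by linarith [ha1 y hy], by have := haN y hy; omega⟩
  obtain ⟨B', hB', rfl⟩ := exists_pairwise_intVals_eq (n := N + 1)
    (List.isChain_iff_pairwise.1 hbdec) fun x hx => ⟨hbnn x hx, by have := hbN x hx; omega⟩
  obtain ⟨C', hC', rfl⟩ := exists_pairwise_intVals_eq (n := N + 1)
    (List.isChain_iff_pairwise.1 hcdec) fun x hx => ⟨hcnn x hx, by have := hcN x hx; omega⟩
  exact key_inequality_fin (v := Fin.last N) hik hA hA' hB' hC'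
    (isTall_of_sub_le_getD (by simpa [intVals] using hak.2.2)) ha1
    (fun x hx => Fin.lt_def.2 (by exact_mod_cast hbN _ (List.mem_map_of_mem hx))) hA'A
    (lexLE.of_intVals (hA'A ▸ hlex)) heq

/-- Key inequality: if `B(a,k) = B(b,k) + B(c,k-1)` with `b ≥_lex a-1`, then
`B(a,k-i) ≤ B(b,k-i) + B(c,k-i-1)` for every `i ≥ 0`. -/
theorem key_inequality
    (m : ℤ) (k : ℕ) (hm : 0 < m) (hk : 0 < k)
    (a : List ℤ) (ha : IsKBinom k m a)
    (b : List ℤ) (hbne : b ≠ []) (hbdec : b.Chain' (· > ·)) (hbnn : ∀ x ∈ b, 0 ≤ x)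
    (c : List ℤ) (hcdec : c.Chain' (· > ·)) (hcnn : ∀ x ∈ c, 0 ≤ x)
    (heq : B a (k : ℤ) = B b (k : ℤ) + B c ((k : ℤ) - 1))
    (hlex : lexLE (a.map (· - 1)) b)
    (i : ℕ) :
    B a ((k : ℤ) - i) ≤ B b ((k : ℤ) - i) + B c ((k : ℤ) - i - 1) :=
  key_inequality_general m k a ha b hbne hbdec hbnn c hcdec hcnn heq hlex i
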